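/- Suppose G satisfies the curvature-dimension inequality CD(m,κ), and f : V → ℝ is a harmonic eigenfunction of the Laplacian with eigenvalue λ > 0, i.e., −Δf(x) = λ f(x) for all x ∈ V. Then for every real number α with (α − 2)λ + 2κ > 0 and every vertex x ∈ V, |∇f|²(x) + α λ f²(x) ≤ ((α² − 4/m)λ + 2κα) / ((α − 2)λ + 2κ) · λ · max_{z ∈ V} f²(z). -/

import Mathlib

open Finset

/-- The weighted degree `d(x) = Σ_y w(x,y)`. -/
noncomputable def deg {V : Type*} [Fintype V] (w : V → V → ℝ) (x : V) : ℝ :=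
  ∑ y, w x y

/-- The graph Laplacian `Δf(x) = (1/d(x)) Σ_y w(x,y) (f(y) − f(x))`. -/
noncomputable def lap {V : Type*} [Fintype V] (w : V → V → ℝ) (f : V → ℝ) (x : V) : ℝ :=
  (1 / deg w x) * ∑ y, w x y * (f y - f x)

/-- The bilinear operator `Γ(f,g)(x) = (1/2)(Δ(fg)(x) − f(x)Δg(x) − g(x)Δf(x))`. -/
noncomputable def gam {V : Type*} [Fintype V] (w : V → V → ℝ) (f g : V → ℝ) (x : V) : ℝ :=
  (1 / 2) * (lap w (fun y => f y * g y) x - f x * lap w g x - g x * lap w f x)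

/-- The curvature operator `Γ₂(f,g)(x) = (1/2)(ΔΓ(f,g)(x) − Γ(f,Δg)(x) − Γ(g,Δf)(x))`. -/
noncomputable def gam2 {V : Type*} [Fintype V] (w : V → V → ℝ) (f g : V → ℝ) (x : V) : ℝ :=
  (1 / 2) * (lap w (gam w f g) x - gam w f (lap w g) x - gam w g (lap w f) x)

/-- The gradient square `|∇f|²(x) = (1/d(x)) Σ_y w(x,y) (f(x) − f(y))²`. -/
noncomputable def gradsq {V : Type*} [Fintype V] (w : V → V → ℝ) (f : V → ℝ) (x : V) : ℝ :=
  (1 / deg w x) * ∑ y, w x y * (f x - f y) ^ 2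

/-- The curvature-dimension inequality `CD(m,κ)`. -/
def CD {V : Type*} [Fintype V] (w : V → V → ℝ) (m κ : ℝ) : Prop :=
  ∀ (f : V → ℝ) (x : V), gam2 w f f x ≥ (1 / m) * (lap w f x) ^ 2 + κ * gam w f f x

/-!
Put `H = |∇f|² + αλ f²` and let `x₀` be a maximum point of `H`, so `ΔH(x₀) ≤ 0`. For an
eigenfunction, `Γ₂(f,f) = Δ|∇f|²/4 + λ|∇f|²/2` and `Δ(f²) = |∇f|² - 2λf²`, so `CD(m,κ)` at `x₀`
turns `ΔH(x₀) ≤ 0` into `((α-2)λ + 2κ)|∇f|²(x₀) ≤ (2α - 4/m)λ² f(x₀)²`, i.e.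
`((α-2)λ + 2κ) H(x₀) ≤ ((α² - 4/m)λ + 2κα) λ f(x₀)²`. Replacing `f(x₀)²` by `max f²` needs the
coefficient `(α² - 4/m)λ + 2κα` to be nonnegative, which follows from the Lichnerowicz estimate
`λ/m + κ ≤ λ`; that estimate comes from summing `CD(m,κ)` against the measure `d`, under which
every `Δg` has total mass zero.
-/

section Calculus

variable {V : Type*} [Fintype V] (w : V → V → ℝ)

theorem lap_const_mul (c : ℝ) (g : V → ℝ) (x : V) :
    lap w (fun y => c * g y) x = c * lap w g x := by
  rw [lap, lap, mul_left_comm, mul_sum _ _ c]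
  congr 1
  exact sum_congr rfl fun y _ => by ring

theorem lap_add (g h : V → ℝ) (x : V) :
    lap w (fun y => g y + h y) x = lap w g x + lap w h x := by
  rw [lap, lap, lap, ← mul_add, ← sum_add_distrib]
  congr 1
  exact sum_congr rfl fun y _ => by ring

theorem lap_sq (f : V → ℝ) (x : V) :
    lap w (fun y => f y ^ 2) x = gradsq w f x + 2 * f x * lap w f x := by
  rw [lap, lap, gradsq, mul_left_comm (2 * f x), ← mul_add, mul_sum _ _ (2 * f x),
    ← sum_add_distrib]
  congr 1
  exact sum_congr rfl fun y _ => by ring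

theorem gam_self (f : V → ℝ) (x : V) : gam w f f x = 2⁻¹ * gradsq w f x := by
  rw [gam, show (fun y => f y * f y) = fun y => f y ^ 2 from funext fun y => sq (f y) |>.symm,
    lap_sq]
  ring

theorem gam_const_mul_right (f g : V → ℝ) (c : ℝ) (x : V) :
    gam w f (fun y => c * g y) x = c * gam w f g x := by
  rw [gam, gam, show (fun y => f y * (c * g y)) = fun y => c * (f y * g y) from
    funext fun y => by ring, lap_const_mul, lap_const_mul]
  ring

theorem gam2_self (f : V → ℝ) (x : V) :
    gam2 w f f x = 4⁻¹ * lap w (gradsq w f) x - gam w f (lap w f) x := by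
  rw [gam2, show gam w f f = fun y => 2⁻¹ * gradsq w f y from funext (gam_self w f),
    lap_const_mul]
  ring

theorem lap_nonpos_of_forall_le {x₀ : V} (hw : ∀ y, 0 ≤ w x₀ y) (g : V → ℝ)
    (hmax : ∀ y, g y ≤ g x₀) : lap w g x₀ ≤ 0 :=
  mul_nonpos_of_nonneg_of_nonpos (one_div_nonneg.mpr (sum_nonneg fun y _ => hw y))
    (sum_nonpos fun y _ => mul_nonpos_of_nonneg_of_nonpos (hw y) (sub_nonpos.mpr (hmax y)))

theorem deg_mul_lap {x : V} (hx : deg w x ≠ 0) (g : V → ℝ) :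
    deg w x * lap w g x = ∑ y, w x y * (g y - g x) := by
  rw [lap, ← mul_assoc, mul_one_div_cancel hx, one_mul]

theorem sum_deg_mul_lap (hsymm : ∀ x y, w x y = w y x) (hdeg : ∀ x, deg w x ≠ 0)
    (g : V → ℝ) : ∑ x, deg w x * lap w g x = 0 := by
  simp only [deg_mul_lap w (hdeg _)]
  have hanti : ∑ x, ∑ y, w x y * (g y - g x) = -∑ x, ∑ y, w x y * (g y - g x) := by
    conv_lhs => rw [sum_comm]
    rw [← sum_neg_distrib]
    exact sum_congr rfl fun x _ => by
      rw [← sum_neg_distrib]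
      exact sum_congr rfl fun y _ => by rw [hsymm]; ring
  linarith

end Calculus

section Eigenfunction

variable {V : Type*} [Fintype V] (w : V → V → ℝ) {f : V → ℝ} {lam : ℝ}

theorem gam_lap_of_eigen (hf : lap w f = fun x => -lam * f x) (x : V) :
    gam w f (lap w f) x = -lam * (2⁻¹ * gradsq w f x) := by
  rw [hf, gam_const_mul_right, gam_self]

theorem lap_gradsq_ge_of_CD {m κ : ℝ} (hCD : CD w m κ) (hf : lap w f = fun x => -lam * f x)
    (x : V) :
    4 / m * lam ^ 2 * f x ^ 2 + (2 * κ - 2 * lam) * gradsq w f x ≤ lap w (gradsq w f) x := by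
  have h := hCD f x
  rw [gam2_self, gam_lap_of_eigen w hf, gam_self, hf] at h
  rw [div_eq_mul_one_div 4 m]
  linarith

theorem gradsq_mul_le_of_isMax {m κ α : ℝ} (hCD : CD w m κ)
    (hf : lap w f = fun x => -lam * f x) {x₀ : V} (hw : ∀ y, 0 ≤ w x₀ y)
    (hmax : ∀ y, gradsq w f y + α * lam * f y ^ 2 ≤ gradsq w f x₀ + α * lam * f x₀ ^ 2) :
    ((α - 2) * lam + 2 * κ) * gradsq w f x₀ ≤ (2 * α - 4 / m) * lam ^ 2 * f x₀ ^ 2 := by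
  have hH := lap_nonpos_of_forall_le w hw _ hmax
  rw [lap_add, lap_const_mul, lap_sq, hf] at hH
  linarith [lap_gradsq_ge_of_CD w hCD hf x₀]

theorem sum_deg_mul_gradsq_of_eigen (hsymm : ∀ x y, w x y = w y x) (hdeg : ∀ x, deg w x ≠ 0)
    (hf : lap w f = fun x => -lam * f x) :
    ∑ x, deg w x * gradsq w f x = 2 * lam * ∑ x, deg w x * f x ^ 2 := by
  have h : ∀ x, deg w x * gradsq w f x
      = deg w x * lap w (fun y => f y ^ 2) x + 2 * lam * (deg w x * f x ^ 2) := fun x => by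
    rw [lap_sq, hf]; ring
  rw [sum_congr rfl fun x _ => h x, sum_add_distrib, sum_deg_mul_lap w hsymm hdeg, ← mul_sum,
    zero_add]

theorem sum_deg_mul_gam2_of_eigen (hsymm : ∀ x y, w x y = w y x) (hdeg : ∀ x, deg w x ≠ 0)
    (hf : lap w f = fun x => -lam * f x) :
    ∑ x, deg w x * gam2 w f f x = lam ^ 2 * ∑ x, deg w x * f x ^ 2 := by
  have h : ∀ x, deg w x * gam2 w f f x
      = 4⁻¹ * (deg w x * lap w (gradsq w f) x) + lam / 2 * (deg w x * gradsq w f x) :=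
    fun x => by rw [gam2_self, gam_lap_of_eigen w hf]; ring
  rw [sum_congr rfl fun x _ => h x, sum_add_distrib, ← mul_sum, ← mul_sum,
    sum_deg_mul_lap w hsymm hdeg, sum_deg_mul_gradsq_of_eigen w hsymm hdeg hf]
  ring

theorem CD.lichnerowicz {m κ : ℝ} (hCD : CD w m κ) (hsymm : ∀ x y, w x y = w y x)
    (hdeg : ∀ x, 0 < deg w x) (hf : lap w f = fun x => -lam * f x) (hlam : 0 < lam)
    (hf0 : f ≠ 0) : lam / m + κ ≤ lam := by
  have hdeg' : ∀ x, deg w x ≠ 0 := fun x => (hdeg x).ne'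
  set T := ∑ x, deg w x * f x ^ 2
  have hT : 0 < T := by
    obtain ⟨x₁, hx₁⟩ := Function.ne_iff.mp hf0
    exact sum_pos' (fun x _ => mul_nonneg (hdeg x).le (sq_nonneg _))
      ⟨x₁, mem_univ _, mul_pos (hdeg x₁) (pow_two_pos_of_ne_zero hx₁)⟩
  have hsum : lam ^ 2 / m * T + κ * lam * T ≤ lam ^ 2 * T := by
    have h := sum_le_sum fun x (_ : x ∈ univ) => mul_le_mul_of_nonneg_left (hCD f x) (hdeg x).le
    have e : ∀ x, deg w x * (1 / m * lap w f x ^ 2 + κ * gam w f f x)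
        = lam ^ 2 / m * (deg w x * f x ^ 2) + κ / 2 * (deg w x * gradsq w f x) := fun x => by
      rw [gam_self, hf]; ring
    rw [sum_congr rfl fun x _ => e x, sum_add_distrib, ← mul_sum, ← mul_sum,
      sum_deg_mul_gradsq_of_eigen w hsymm hdeg' hf, sum_deg_mul_gam2_of_eigen w hsymm hdeg' hf]
      at h
    linarith
  refine le_of_mul_le_mul_right ?_ (mul_pos hlam hT)
  linarith [show (lam / m + κ) * (lam * T) = lam ^ 2 / m * T + κ * lam * T by ring]

end Eigenfunction

theorem harnack_coeff_nonneg {m κ lam α : ℝ} (hm : 0 < m) (hlam : 0 < lam)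
    (hL : lam / m + κ ≤ lam) (hα : 0 < (α - 2) * lam + 2 * κ) :
    0 ≤ (α ^ 2 - 4 / m) * lam + 2 * κ * α := by
  have hα2 : 2 / m < α := by
    have : 2 / m * lam < α * lam := by
      linarith [show 2 / m * lam = 2 * (lam / m) by ring]
    exact lt_of_mul_lt_mul_right this hlam.le
  have h2m : 0 < 2 / m := by positivity
  have : (α ^ 2 - 4 / m) * lam + 2 * κ * α
      = (α + 2) * ((α - 2) * lam + 2 * κ) + 4 * (lam - lam / m - κ) := by ring
  rw [this]
  have : 0 < (α + 2) * ((α - 2) * lam + 2 * κ) := mul_pos (by linarith) hα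
  linarith

theorem harnack_alpha_general {V : Type*} [Fintype V] (w : V → V → ℝ)
    (hsymm : ∀ x y, w x y = w y x) (hnonneg : ∀ x y, 0 ≤ w x y)
    (hdeg : ∀ x, 0 < deg w x)
    (m κ : ℝ) (hm : 0 < m) (hCD : CD w m κ)
    (lam : ℝ) (hlam : 0 < lam) (f : V → ℝ) (hf : ∀ x, -lap w f x = lam * f x)
    (α : ℝ) (hα : (α - 2) * lam + 2 * κ > 0) (x : V) :
    gradsq w f x + α * lam * f x ^ 2 ≤
      ((α ^ 2 - 4 / m) * lam + 2 * κ * α) / ((α - 2) * lam + 2 * κ) * lam *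
        ⨆ z, f z ^ 2 := by
  have hlap : lap w f = fun x => -lam * f x := funext fun x => by linarith [hf x]
  have : Nonempty V := ⟨x⟩
  obtain ⟨x₀, hmax⟩ := Finite.exists_max fun z => gradsq w f z + α * lam * f z ^ 2
  have hgrad := gradsq_mul_le_of_isMax w hCD hlap (hnonneg x₀) hmax
  have hsup : ((α ^ 2 - 4 / m) * lam + 2 * κ * α) * lam * f x₀ ^ 2
      ≤ ((α ^ 2 - 4 / m) * lam + 2 * κ * α) * lam * ⨆ z, f z ^ 2 := by
    by_cases hf0 : f = 0
    · simp [hf0]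
    have hN := harnack_coeff_nonneg hm hlam (hCD.lichnerowicz w hsymm hdeg hlap hlam hf0) hα
    have hx₀ : f x₀ ^ 2 ≤ ⨆ z, f z ^ 2 :=
      le_ciSup (f := fun z => f z ^ 2) (Set.finite_range _).bddAbove x₀
    exact mul_le_mul_of_nonneg_left hx₀ (mul_nonneg hN hlam.le)
  rw [div_mul_eq_mul_div, div_mul_eq_mul_div, le_div_iff₀ hα]
  calc (gradsq w f x + α * lam * f x ^ 2) * ((α - 2) * lam + 2 * κ)
      ≤ (gradsq w f x₀ + α * lam * f x₀ ^ 2) * ((α - 2) * lam + 2 * κ) :=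
        mul_le_mul_of_nonneg_right (hmax x) hα.le
    _ ≤ ((α ^ 2 - 4 / m) * lam + 2 * κ * α) * lam * f x₀ ^ 2 := by linarith
    _ ≤ _ := hsup

theorem harnack_alpha {V : Type*} [Fintype V] (w : V → V → ℝ)
    (hsymm : ∀ x y, w x y = w y x) (hnonneg : ∀ x y, 0 ≤ w x y)
    (hloop : ∀ x, w x x = 0) (hdeg : ∀ x, 0 < deg w x)
    (hconn : (SimpleGraph.fromRel fun x y => 0 < w x y).Connected)
    (m κ : ℝ) (hm : 0 < m) (hCD : CD w m κ)
    (lam : ℝ) (hlam : 0 < lam) (f : V → ℝ) (hf : ∀ x, -lap w f x = lam * f x)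
    (α : ℝ) (hα : (α - 2) * lam + 2 * κ > 0) (x : V) :
    gradsq w f x + α * lam * f x ^ 2 ≤
      ((α ^ 2 - 4 / m) * lam + 2 * κ * α) / ((α - 2) * lam + 2 * κ) * lam *
        ⨆ z, f z ^ 2 :=
  harnack_alpha_general w hsymm hnonneg hdeg m κ hm hCD lam hlam f hf α hα x
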